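/- arXiv:1501.06502 — 2 statements merged into one kernel-verified Lean document; each statement's English description precedes it below -/
import Mathlib

section
/- Let A be an m×m complex matrix, C₁ an n₁×m complex matrix, and K₂ an m×n₂ complex matrix. If C₁ Aᵏ K₂ = 0 for every k ∈ {0, 1, …, m−1}, then for every z ∈ ℂ such that I − zA is invertible, C₁ (I − zA)⁻¹ K₂ = 0. -/
/-!
By Cayley–Hamilton every polynomial in `A` is a linear combination of `1, A, …, A^(m-1)`, so
`C₁ X K₂ = 0` for every `X` in the subalgebra generated by `A`. The inverse of a matrix `B` lies
in the subalgebra generated by `B`: writing the characteristic polynomial as `χ = X·q + χ(0)`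
gives `B · q(B) = -χ(0)`, and `χ(0) = ± det B` is a unit when `B` is invertible (a singular
matrix has `B⁻¹ = 0` by convention). Since `I - zA` is a polynomial in `A`, so is its inverse.
-/

open Polynomial

namespace Matrix

variable {n R : Type*} [Fintype n] [DecidableEq n] [CommRing R]

theorem mul_mul_eq_zero_of_mem_adjoin [Nontrivial R] {l o : Type*} {M X : Matrix n n R}
    {C : Matrix l n R} {K : Matrix n o R} (h : ∀ k < Fintype.card n, C * M ^ k * K = 0)
    (hX : X ∈ Algebra.adjoin R {M}) : C * X * K = 0 := by
  rw [Algebra.adjoin_singleton_eq_range_aeval, AlgHom.mem_range] at hX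
  obtain ⟨p, rfl⟩ := hX
  rw [aeval_eq_aeval_mod_charpoly, aeval_eq_sum_range, Matrix.mul_sum, Matrix.sum_mul]
  set r := p %ₘ M.charpoly
  have hr : r.degree < Fintype.card n :=
    M.charpoly_degree_eq_dim ▸ degree_modByMonic_lt p M.charpoly_monic
  refine Finset.sum_eq_zero fun i _ => ?_
  by_cases hi : r.coeff i = 0
  · simp [hi]
  · have hin : i < Fintype.card n := by exact_mod_cast (le_degree_of_ne_zero hi).trans_lt hr
    rw [Matrix.mul_smul, Matrix.smul_mul, h i hin, smul_zero]

theorem inv_mem_adjoin_singleton (B : Matrix n n R) : B⁻¹ ∈ Algebra.adjoin R {B} := by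
  by_cases hB : IsUnit B.det
  swap
  · rw [nonsing_inv_apply_not_isUnit B hB]
    exact zero_mem _
  set χ := B.charpoly
  have hχ0 : IsUnit (χ.coeff 0) := by
    rw [det_eq_sign_charpoly_coeff] at hB
    exact isUnit_of_mul_isUnit_right hB
  have hmul : B * aeval B χ.divX = -(χ.coeff 0 • 1) := by
    have := congrArg (aeval B) (X_mul_divX_add χ)
    rw [aeval_self_charpoly, map_add, map_mul, aeval_X, aeval_C,
      Algebra.algebraMap_eq_smul_one] at this
    exact eq_neg_of_add_eq_zero_left this
  have hinv : B⁻¹ = -(↑hχ0.unit⁻¹ : R) • aeval B χ.divX := by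
    refine inv_eq_right_inv ?_
    rw [Matrix.mul_smul, hmul, smul_neg, neg_smul, neg_neg, smul_smul, IsUnit.val_inv_mul, one_smul]
  rw [hinv]
  exact Subalgebra.smul_mem _ (aeval_mem_adjoin_singleton R B) _

end Matrix

theorem noncausality_transfer_block_zero_general (m n₁ n₂ : ℕ)
    (A : Matrix (Fin m) (Fin m) ℂ) (C₁ : Matrix (Fin n₁) (Fin m) ℂ)
    (K₂ : Matrix (Fin m) (Fin n₂) ℂ)
    (h : ∀ k < m, C₁ * A ^ k * K₂ = 0)
    (z : ℂ) :
    C₁ * (1 - z • A)⁻¹ * K₂ = 0 := by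
  have hB : 1 - z • A ∈ Algebra.adjoin ℂ {A} :=
    sub_mem (one_mem _) (Subalgebra.smul_mem _ (Algebra.self_mem_adjoin_singleton ℂ A) z)
  have hinv : (1 - z • A)⁻¹ ∈ Algebra.adjoin ℂ {A} :=
    Algebra.adjoin_le (Set.singleton_subset_iff.mpr hB) (Matrix.inv_mem_adjoin_singleton _)
  exact Matrix.mul_mul_eq_zero_of_mem_adjoin (by simpa using h) hinv

/-- If `C₁ Aᵏ K₂ = 0` for `k = 0, …, m-1`, then the (1,2) block of the resolvent part
of the transfer function vanishes: `C₁ (I - zA)⁻¹ K₂ = 0` whenever `I - zA` is invertible. -/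
theorem noncausality_transfer_block_zero (m n₁ n₂ : ℕ)
    (A : Matrix (Fin m) (Fin m) ℂ) (C₁ : Matrix (Fin n₁) (Fin m) ℂ)
    (K₂ : Matrix (Fin m) (Fin n₂) ℂ)
    (h : ∀ k < m, C₁ * A ^ k * K₂ = 0)
    (z : ℂ) (hz : IsUnit (1 - z • A)) :
    C₁ * (1 - z • A)⁻¹ * K₂ = 0 :=
  noncausality_transfer_block_zero_general m n₁ n₂ A C₁ K₂ h z
end

section
/- Let M be an invertible square matrix partitioned into 3×3 blocks M = [[M₁₁, M₁₂, M₁₃], [M₂₁, M₂₂, M₂₃], [M₃₁, M₃₂, M₃₃]] with square diagonal blocks, and suppose both M₃₃ and the submatrix P = [[M₁₁, M₁₃], [M₃₁, M₃₃]] are invertible. Writing M⁻¹ = [[B₁₁, B₁₂, B₁₃], [B₂₁, B₂₂, B₂₃], [B₃₁, B₃₂, B₃₃]] in the same block partition, we have B₁₂ = 0 if and only if M₁₂ − M₁₃ M₃₃⁻¹ M₃₂ = 0. -/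
/-!
Invert `M` in two stages. Eliminating the invertible block `M₃₃` shows that the `{1,2} × {1,2}`
corner of `M⁻¹` is the inverse of the Schur complement `S = M / M₃₃`, whose `(1,2)` block is
exactly `M₁₂ - M₁₃ M₃₃⁻¹ M₃₂`. An invertible matrix is block lower-triangular if and only if its
inverse is, so the `(1,2)` blocks of `S` and `S⁻¹` vanish together.
-/

namespace Matrix

section Blocks

variable {α l₁ m₁ n₁ l₂ m₂ n₂ : Type*}

theorem fromBlocks_fromCols_fromRows_fromBlocks_eq_submatrix_sumAssoc
    (M₁₁ : Matrix l₁ l₂ α) (M₁₂ : Matrix l₁ m₂ α) (M₁₃ : Matrix l₁ n₂ α)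
    (M₂₁ : Matrix m₁ l₂ α) (M₂₂ : Matrix m₁ m₂ α) (M₂₃ : Matrix m₁ n₂ α)
    (M₃₁ : Matrix n₁ l₂ α) (M₃₂ : Matrix n₁ m₂ α) (M₃₃ : Matrix n₁ n₂ α) :
    fromBlocks M₁₁ (fromCols M₁₂ M₁₃) (fromRows M₂₁ M₃₁) (fromBlocks M₂₂ M₂₃ M₃₂ M₃₃) =
      (fromBlocks (fromBlocks M₁₁ M₁₂ M₂₁ M₂₂) (fromRows M₁₃ M₂₃) (fromCols M₃₁ M₃₂) M₃₃).submatrix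
        (Equiv.sumAssoc l₁ m₁ n₁).symm (Equiv.sumAssoc l₂ m₂ n₂).symm := by
  ext (i | i | i) (j | j | j) <;> rfl

theorem fromBlocks_sub_fromRows_mul_mul_fromCols [Fintype n₁] [Fintype n₂] [Ring α]
    (M₁₁ : Matrix l₁ l₂ α) (M₁₂ : Matrix l₁ m₂ α) (M₁₃ : Matrix l₁ n₁ α)
    (M₂₁ : Matrix m₁ l₂ α) (M₂₂ : Matrix m₁ m₂ α) (M₂₃ : Matrix m₁ n₁ α)
    (M₃₁ : Matrix n₂ l₂ α) (M₃₂ : Matrix n₂ m₂ α) (E : Matrix n₁ n₂ α) :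
    fromBlocks M₁₁ M₁₂ M₂₁ M₂₂ - fromRows M₁₃ M₂₃ * E * fromCols M₃₁ M₃₂ =
      fromBlocks (M₁₁ - M₁₃ * E * M₃₁) (M₁₂ - M₁₃ * E * M₃₂)
        (M₂₁ - M₂₃ * E * M₃₁) (M₂₂ - M₂₃ * E * M₃₂) := by
  rw [fromRows_mul M₁₃ M₂₃, fromRows_mul_fromCols]
  ext (i | i) (j | j) <;> rfl

end Blocks

variable {α m n : Type*} [CommRing α] [Fintype m] [Fintype n] [DecidableEq m] [DecidableEq n]

theorem isUnit_sub_mul_inv_mul_of_isUnit_fromBlocks {A : Matrix m m α} {B : Matrix m n α}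
    {C : Matrix n m α} {D : Matrix n n α} (hN : IsUnit (fromBlocks A B C D)) (hD : IsUnit D) :
    IsUnit (A - B * D⁻¹ * C) := by
  obtain ⟨_⟩ := hD.nonempty_invertible
  rw [← invOf_eq_nonsing_inv]
  exact isUnit_fromBlocks_iff_of_invertible₂₂.mp hN

theorem toBlocks₁₁_inv_fromBlocks {A : Matrix m m α} {B : Matrix m n α}
    {C : Matrix n m α} {D : Matrix n n α} (hN : IsUnit (fromBlocks A B C D)) (hD : IsUnit D) :
    (fromBlocks A B C D)⁻¹.toBlocks₁₁ = (A - B * D⁻¹ * C)⁻¹ := by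
  obtain ⟨_⟩ := hN.nonempty_invertible
  obtain ⟨_⟩ := hD.nonempty_invertible
  let := invertibleOfFromBlocks₂₂Invertible A B C D
  rw [← invOf_eq_nonsing_inv, invOf_fromBlocks₂₂_eq, toBlocks_fromBlocks₁₁,
    ← invOf_eq_nonsing_inv D, invOf_eq_nonsing_inv]

theorem toBlocks₁₂_inv_eq_zero {T : Matrix (m ⊕ n) (m ⊕ n) α} (hT : IsUnit T)
    (h : T.toBlocks₁₂ = 0) : T⁻¹.toBlocks₁₂ = 0 := by
  rw [← fromBlocks_toBlocks T, h] at hT ⊢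
  obtain ⟨hA, hD⟩ := isUnit_fromBlocks_zero₁₂.mp hT
  rw [inv_fromBlocks_zero₁₂_of_isUnit_iff _ _ _ (iff_of_true hA hD), toBlocks_fromBlocks₁₂]

theorem toBlocks₁₂_inv_eq_zero_iff {T : Matrix (m ⊕ n) (m ⊕ n) α} (hT : IsUnit T) :
    T⁻¹.toBlocks₁₂ = 0 ↔ T.toBlocks₁₂ = 0 := by
  refine ⟨fun h => ?_, toBlocks₁₂_inv_eq_zero hT⟩
  have hdet : IsUnit T.det := (isUnit_iff_isUnit_det T).mp hT
  simpa only [nonsing_inv_nonsing_inv T hdet] using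
    toBlocks₁₂_inv_eq_zero ((isUnit_iff_isUnit_det _).mpr (isUnit_nonsing_inv_det T hdet)) h

end Matrix

open Matrix in
theorem inverse_block12_zero_iff_conditional_general (n₁ n₂ n₃ : ℕ)
    (M₁₁ : Matrix (Fin n₁) (Fin n₁) ℂ) (M₁₂ : Matrix (Fin n₁) (Fin n₂) ℂ)
    (M₁₃ : Matrix (Fin n₁) (Fin n₃) ℂ)
    (M₂₁ : Matrix (Fin n₂) (Fin n₁) ℂ) (M₂₂ : Matrix (Fin n₂) (Fin n₂) ℂ)
    (M₂₃ : Matrix (Fin n₂) (Fin n₃) ℂ)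
    (M₃₁ : Matrix (Fin n₃) (Fin n₁) ℂ) (M₃₂ : Matrix (Fin n₃) (Fin n₂) ℂ)
    (M₃₃ : Matrix (Fin n₃) (Fin n₃) ℂ)
    (M : Matrix (Fin n₁ ⊕ (Fin n₂ ⊕ Fin n₃)) (Fin n₁ ⊕ (Fin n₂ ⊕ Fin n₃)) ℂ)
    (hM : M = Matrix.fromBlocks M₁₁ (Matrix.fromCols M₁₂ M₁₃)
        (Matrix.fromRows M₂₁ M₃₁) (Matrix.fromBlocks M₂₂ M₂₃ M₃₂ M₃₃))
    (hMu : IsUnit M) (h33 : IsUnit M₃₃) :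
    (∀ (i : Fin n₁) (j : Fin n₂), M⁻¹ (Sum.inl i) (Sum.inr (Sum.inl j)) = 0) ↔
      M₁₂ - M₁₃ * M₃₃⁻¹ * M₃₂ = 0 := by
  set N := fromBlocks (fromBlocks M₁₁ M₁₂ M₂₁ M₂₂) (fromRows M₁₃ M₂₃) (fromCols M₃₁ M₃₂) M₃₃
  have hMN : M = N.submatrix (Equiv.sumAssoc _ _ _).symm (Equiv.sumAssoc _ _ _).symm :=
    hM.trans (fromBlocks_fromCols_fromRows_fromBlocks_eq_submatrix_sumAssoc ..)
  have hNu : IsUnit N := (isUnit_submatrix_equiv _ _).mp (hMN ▸ hMu)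
  have hMinv : M⁻¹ = N⁻¹.submatrix (Equiv.sumAssoc _ _ _).symm (Equiv.sumAssoc _ _ _).symm := by
    rw [hMN, inv_submatrix_equiv]
  have hS := isUnit_sub_mul_inv_mul_of_isUnit_fromBlocks hNu h33
  rw [fromBlocks_sub_fromRows_mul_mul_fromCols] at hS
  calc (∀ i j, M⁻¹ (Sum.inl i) (Sum.inr (Sum.inl j)) = 0)
      ↔ N⁻¹.toBlocks₁₁.toBlocks₁₂ = 0 := by rw [hMinv, ← Matrix.ext_iff]; rfl
    _ ↔ _ := by
      rw [toBlocks₁₁_inv_fromBlocks hNu h33, fromBlocks_sub_fromRows_mul_mul_fromCols,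
        toBlocks₁₂_inv_eq_zero_iff hS, toBlocks_fromBlocks₁₂]

/-- For an invertible 3×3 block matrix `M` with `M₃₃` and the corner submatrix
`P = [[M₁₁, M₁₃], [M₃₁, M₃₃]]` invertible, the (1,2) block of `M⁻¹` vanishes if and
only if `M₁₂ - M₁₃ M₃₃⁻¹ M₃₂ = 0`. -/
theorem inverse_block12_zero_iff_conditional (n₁ n₂ n₃ : ℕ)
    (M₁₁ : Matrix (Fin n₁) (Fin n₁) ℂ) (M₁₂ : Matrix (Fin n₁) (Fin n₂) ℂ)
    (M₁₃ : Matrix (Fin n₁) (Fin n₃) ℂ)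
    (M₂₁ : Matrix (Fin n₂) (Fin n₁) ℂ) (M₂₂ : Matrix (Fin n₂) (Fin n₂) ℂ)
    (M₂₃ : Matrix (Fin n₂) (Fin n₃) ℂ)
    (M₃₁ : Matrix (Fin n₃) (Fin n₁) ℂ) (M₃₂ : Matrix (Fin n₃) (Fin n₂) ℂ)
    (M₃₃ : Matrix (Fin n₃) (Fin n₃) ℂ)
    (M : Matrix (Fin n₁ ⊕ (Fin n₂ ⊕ Fin n₃)) (Fin n₁ ⊕ (Fin n₂ ⊕ Fin n₃)) ℂ)
    (hM : M = Matrix.fromBlocks M₁₁ (Matrix.fromCols M₁₂ M₁₃)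
        (Matrix.fromRows M₂₁ M₃₁) (Matrix.fromBlocks M₂₂ M₂₃ M₃₂ M₃₃))
    (hMu : IsUnit M) (h33 : IsUnit M₃₃)
    (hP : IsUnit (Matrix.fromBlocks M₁₁ M₁₃ M₃₁ M₃₃)) :
    (∀ (i : Fin n₁) (j : Fin n₂), M⁻¹ (Sum.inl i) (Sum.inr (Sum.inl j)) = 0) ↔
      M₁₂ - M₁₃ * M₃₃⁻¹ * M₃₂ = 0 :=
  inverse_block12_zero_iff_conditional_general n₁ n₂ n₃ M₁₁ M₁₂ M₁₃ M₂₁ M₂₂ M₂₃ M₃₁ M₃₂ M₃₃ M hM hMu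
    h33
end
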